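/- For a finite sequence D of length n with entries colored 'black', 'red', or 'other', define Z(D) = #{(i,j) : i < j, D(i)=black, D(j)=red} - #{(i,j) : i < j, D(i)=red, D(j)=black}. If D' is obtained from D by changing the entry at position i from red to black, then Z(D') - Z(D) = n + 1 - 2i + (number of 'other' entries before position i) - (number of 'other' entries after position i). -/
import Mathlib


open Finset

inductive Color | black | red | other
deriving DecidableEq

/-- Signed count of black-red pairs minus red-black pairs. -/
def Z {n : ℕ} (D : Fin n → Color) : ℤ :=
  ((univ.filter fun p : Fin n × Fin n =>
      p.1 < p.2 ∧ D p.1 = Color.black ∧ D p.2 = Color.red).card : ℤ)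
  - ((univ.filter fun p : Fin n × Fin n =>
      p.1 < p.2 ∧ D p.1 = Color.red ∧ D p.2 = Color.black).card : ℤ)

/-- Changing the entry at (1-indexed) position `i` from red to black changes `Z` by
`n + 1 - 2i + (#other before i) - (#other after i)`. -/
theorem red_to_black_change {n : ℕ} (D D' : Fin n → Color) (i : Fin n)
    (hD : D i = Color.red) (hD' : D' i = Color.black)
    (hagree : ∀ j, j ≠ i → D' j = D j) :
    Z D' - Z D =
      (n : ℤ) + 1 - 2 * (((i : ℕ) : ℤ) + 1)
        + ((univ.filter fun j : Fin n => j < i ∧ D j = Color.other).card : ℤ)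
        - ((univ.filter fun j : Fin n => i < j ∧ D j = Color.other).card : ℤ) := by
  classical
  set g : Fin n → Fin n → ℤ := fun a b =>
    ((if a < b ∧ D' a = Color.black ∧ D' b = Color.red then (1:ℤ) else 0)
      - (if a < b ∧ D' a = Color.red ∧ D' b = Color.black then 1 else 0))
    - ((if a < b ∧ D a = Color.black ∧ D b = Color.red then 1 else 0)
      - (if a < b ∧ D a = Color.red ∧ D b = Color.black then 1 else 0)) with hg
  have key : Z D' - Z D = ∑ a : Fin n, ∑ b : Fin n, g a b := by
    rw [← Fintype.sum_prod_type']
    simp only [Z, Finset.card_filter, hg]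
    push_cast
    rw [← Finset.sum_sub_distrib, ← Finset.sum_sub_distrib, ← Finset.sum_sub_distrib]
  have hzero : ∀ a b : Fin n, a ≠ i → b ≠ i → g a b = 0 := by
    intro a b ha hb
    simp [hg, hagree a ha, hagree b hb]
  have hgii : g i i = 0 := by simp [hg]
  have hrow : ∀ a : Fin n, a ≠ i → ∑ b : Fin n, g a b = g a i := by
    intro a ha
    apply Finset.sum_eq_single_of_mem i (Finset.mem_univ i)
    intro b _ hb
    exact hzero a b ha hb
  have hcol : ∀ a : Fin n, g a i = -(if a < i ∧ D a ≠ Color.other then (1:ℤ) else 0) := by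
    intro a
    by_cases ha : a = i
    · subst ha; simp [hg]
    · simp only [hg, hD, hD', hagree a ha]
      rcases hDa : D a with _ | _ | _ <;> by_cases hlt : a < i <;> simp [hlt]
  have hrowi : ∀ b : Fin n, g i b = (if i < b ∧ D b ≠ Color.other then (1:ℤ) else 0) := by
    intro b
    by_cases hb : b = i
    · subst hb; simp [hg]
    · simp only [hg, hD, hD', hagree b hb]
      rcases hDb : D b with _ | _ | _ <;> by_cases hlt : i < b <;> simp [hlt]
  rw [key, ← Finset.add_sum_erase _ _ (Finset.mem_univ i),
    Finset.sum_congr rfl (fun a ha => hrow a (Finset.ne_of_mem_erase ha)),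
    Finset.sum_erase (f := fun a => g a i) _ hgii,
    Finset.sum_congr rfl (fun b _ => hrowi b),
    Finset.sum_congr rfl (fun a _ => hcol a)]
  have split1 : ∑ b : Fin n, (if i < b ∧ D b ≠ Color.other then (1:ℤ) else 0)
      = (∑ b : Fin n, (if i < b then (1:ℤ) else 0))
        - ∑ b : Fin n, (if i < b ∧ D b = Color.other then (1:ℤ) else 0) := by
    rw [← Finset.sum_sub_distrib]
    apply Finset.sum_congr rfl
    intro b _
    by_cases h1 : i < b <;> by_cases h2 : D b = Color.other <;> simp [h1, h2]
  have split2 : ∑ a : Fin n, (if a < i ∧ D a ≠ Color.other then (1:ℤ) else 0)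
      = (∑ a : Fin n, (if a < i then (1:ℤ) else 0))
        - ∑ a : Fin n, (if a < i ∧ D a = Color.other then (1:ℤ) else 0) := by
    rw [← Finset.sum_sub_distrib]
    apply Finset.sum_congr rfl
    intro a _
    by_cases h1 : a < i <;> by_cases h2 : D a = Color.other <;> simp [h1, h2]
  have hS1 : ∑ b : Fin n, (if i < b then (1:ℤ) else 0) = (n : ℤ) - 1 - (i : ℕ) := by
    rw [Finset.sum_boole]
    have : (univ.filter fun b : Fin n => i < b) = Finset.Ioi i := Finset.filter_lt_eq_Ioi
    rw [this, Fin.card_Ioi]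
    have := i.isLt
    omega
  have hS2 : ∑ a : Fin n, (if a < i then (1:ℤ) else 0) = (i : ℕ) := by
    rw [Finset.sum_boole]
    have : (univ.filter fun a : Fin n => a < i) = Finset.Iio i := Finset.filter_gt_eq_Iio
    rw [this, Fin.card_Iio]
  have hE : ((univ.filter fun j : Fin n => j < i ∧ D j = Color.other).card : ℤ)
      = ∑ a : Fin n, (if a < i ∧ D a = Color.other then (1:ℤ) else 0) := by
    rw [Finset.sum_boole]
  have hF : ((univ.filter fun j : Fin n => i < j ∧ D j = Color.other).card : ℤ)
      = ∑ b : Fin n, (if i < b ∧ D b = Color.other then (1:ℤ) else 0) := by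
    rw [Finset.sum_boole]
  rw [Finset.sum_neg_distrib]
  rw [split1, split2, hS1, hS2, hE, hF]
  ring
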